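/- arXiv:2507.16302 — 3 statements merged into one kernel-verified Lean document; each statement's English description precedes it below -/
import Mathlib

section
/- Let d ≥ 1 and let f : ℝ^d → ℝ be twice continuously differentiable. Let z : Ω → ℝ^d be a random vector on a probability space with normalized isotropic second moment such that ‖z‖ ≤ C almost surely for some constant C. Then for every θ ∈ ℝ^d, the quotient (E[f(θ + σ·z)] − f(θ)) / σ² tends to (1/(2d)) · Tr(∇²f(θ)) as σ → 0 through nonzero values, where Tr(∇²f(θ)) = Σ_{i=1}^d ∂²f/∂θ_i²(θ) is the trace of the Hessian of f at θ. (Asymptotic form of Proposition 1.) -/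
open MeasureTheory Filter Topology Metric
open scoped RealInnerProductSpace

section AuxLemmas
variable {E : Type*} [NormedAddCommGroup E] [NormedSpace ℝ E]


/-- pointwise second-order limit along a direction -/
lemma ptwise_limit (f : E → ℝ) (hf : ContDiff ℝ 2 f) (θ v : E) :
    Tendsto (fun σ : ℝ => (f (θ + σ • v) - f θ - σ * fderiv ℝ f θ v) / σ ^ 2)
      (𝓝[≠] (0:ℝ)) (𝓝 ((1/2) * fderiv ℝ (fderiv ℝ f) θ v v)) := by
  have hfd : Differentiable ℝ f := hf.differentiable two_ne_zero
  have hfd1 : ContDiff ℝ 1 (fderiv ℝ f) := hf.fderiv_right (le_refl 2)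
  have hline : ∀ σ : ℝ, HasDerivAt (fun σ : ℝ => θ + σ • v) v σ := by
    intro σ
    simpa using ((hasDerivAt_id σ).smul_const v).const_add θ
  have hphi : ∀ σ : ℝ, HasDerivAt (fun σ : ℝ => f (θ + σ • v))
      (fderiv ℝ f (θ + σ • v) v) σ := fun σ =>
    ((hfd (θ + σ • v)).hasFDerivAt).comp_hasDerivAt σ (hline σ)
  -- derivative of ψ σ = fderiv f (θ + σ v) v at 0
  have hpsi : HasDerivAt (fun σ : ℝ => fderiv ℝ f (θ + σ • v) v)
      (fderiv ℝ (fderiv ℝ f) θ v v) 0 := by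
    have h2 : HasFDerivAt (fderiv ℝ f) (fderiv ℝ (fderiv ℝ f) θ) θ :=
      ((hfd1.differentiable one_ne_zero) θ).hasFDerivAt
    have h3 : HasDerivAt (fun σ : ℝ => fderiv ℝ f (θ + σ • v))
        (fderiv ℝ (fderiv ℝ f) θ v) 0 := by
      have h2' : HasFDerivAt (fderiv ℝ f) (fderiv ℝ (fderiv ℝ f) θ) (θ + (0:ℝ) • v) := by
        simpa using h2
      exact h2'.comp_hasDerivAt 0 (hline 0)
    have := (ContinuousLinearMap.apply ℝ ℝ v).hasFDerivAt.comp_hasDerivAt 0 h3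
    exact this
  set B := fderiv ℝ (fderiv ℝ f) θ
  set L := fderiv ℝ f θ
  apply HasDerivAt.lhopital_zero_nhdsNE
    (f' := fun σ : ℝ => fderiv ℝ f (θ + σ • v) v - L v)
    (g' := fun σ : ℝ => 2 * σ)
  · filter_upwards with σ
    have : HasDerivAt (fun σ : ℝ => σ * (L v)) (L v) σ := by
      simpa using (hasDerivAt_id σ).mul_const (L v)
    exact ((hphi σ).sub_const (f θ)).sub this
  · filter_upwards with σ
    simpa using hasDerivAt_pow 2 σ
  · filter_upwards [self_mem_nhdsWithin] with σ (hσ : σ ≠ 0)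
    exact mul_ne_zero two_ne_zero hσ
  · have hc : Continuous fun σ : ℝ => f (θ + σ • v) - f θ - σ * L v := by
      fun_prop (disch := exact hf.continuous)
    have : Tendsto (fun σ : ℝ => f (θ + σ • v) - f θ - σ * L v) (𝓝 0) (𝓝 0) := by
      have := hc.tendsto 0
      simpa using this
    exact this.mono_left nhdsWithin_le_nhds
  · have : Tendsto (fun σ : ℝ => σ ^ 2) (𝓝 0) (𝓝 0) := by
      simpa using (continuous_pow 2).tendsto (0:ℝ)
    exact this.mono_left nhdsWithin_le_nhds
  · -- (ψ σ - ψ 0)/(2σ) → (B v v)/2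
    have hs := hasDerivAt_iff_tendsto_slope.mp hpsi
    have h2 : Tendsto (fun σ : ℝ =>
        (fderiv ℝ f (θ + σ • v) v - L v) / σ / 2) (𝓝[≠] 0) (𝓝 (B v v / 2)) := by
      apply Tendsto.div_const
      refine hs.congr' ?_
      filter_upwards [self_mem_nhdsWithin] with σ (hσ : σ ≠ 0)
      rw [slope_def_field]
      simp [L]
    refine h2.congr' ?_ |>.mono_right (le_of_eq ?_)
    · filter_upwards [self_mem_nhdsWithin] with σ (hσ : σ ≠ 0)
      rw [div_div]
      ring_nf
    · ring

/-- quadratic Taylor remainder bound -/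
lemma quad_bound (f : E → ℝ) (hf : ContDiff ℝ 2 f) (θ : E) (r M : ℝ) (hM0 : 0 ≤ M)
    (hM : ∀ x ∈ closedBall θ r, ‖fderiv ℝ (fderiv ℝ f) x‖ ≤ M)
    (h : E) (hh : ‖h‖ ≤ r) :
    ‖f (θ + h) - f θ - fderiv ℝ f θ h‖ ≤ M * ‖h‖ ^ 2 := by
  have hfd : Differentiable ℝ f := hf.differentiable two_ne_zero
  have hfd1 : Differentiable ℝ (fderiv ℝ f) :=
    (hf.fderiv_right (m := 1) (le_refl 2)).differentiable one_ne_zero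
  set L := fderiv ℝ f θ
  -- Lipschitz bound on fderiv f over closedBall θ r
  have key : ∀ x ∈ closedBall θ ‖h‖, ‖fderiv ℝ (fun y => f y - L y) x‖ ≤ M * ‖h‖ := by
    intro x hx
    have hx' : x ∈ closedBall θ r := closedBall_subset_closedBall hh hx
    have hLip : ‖fderiv ℝ f x - fderiv ℝ f θ‖ ≤ M * ‖x - θ‖ :=
      (convex_closedBall θ r).norm_image_sub_le_of_norm_fderiv_le
        (fun y _ => (hfd1 y)) (fun y hy => hM y hy)
        (mem_closedBall_self (le_trans (norm_nonneg h) hh)) hx'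
    have hder : fderiv ℝ (fun y => f y - L y) x = fderiv ℝ f x - L := by
      rw [fderiv_fun_sub (hfd x) (L.differentiableAt), L.fderiv]
    rw [hder]
    calc ‖fderiv ℝ f x - L‖ ≤ M * ‖x - θ‖ := hLip
    _ ≤ M * ‖h‖ := by
        apply mul_le_mul_of_nonneg_left _ hM0
        simpa [dist_eq_norm] using hx
  have main : ‖(f (θ + h) - L (θ + h)) - (f θ - L θ)‖ ≤ M * ‖h‖ * ‖(θ + h) - θ‖ :=
    (convex_closedBall θ ‖h‖).norm_image_sub_le_of_norm_fderiv_le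
      (fun y _ => (hfd y).sub (L.differentiable y))
      key (mem_closedBall_self (norm_nonneg h))
      (by simp [dist_eq_norm])
  have : (f (θ + h) - L (θ + h)) - (f θ - L θ) = f (θ + h) - f θ - L h := by
    have := L.map_add θ h
    simp [this]; ring
  rw [this] at main
  calc ‖f (θ + h) - f θ - L h‖ ≤ M * ‖h‖ * ‖(θ + h) - θ‖ := main
  _ = M * ‖h‖ ^ 2 := by simp [add_sub_cancel_left]; ring

end AuxLemmas

/-- decomposition of a Euclidean vector in the standard basis -/
lemma euclid_decomp {d : ℕ} (x : EuclideanSpace ℝ (Fin d)) :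
    x = ∑ i, x i • EuclideanSpace.single i (1:ℝ) := by
  ext j
  have : (∑ i, x i • EuclideanSpace.single i (1:ℝ)) j
      = ∑ i, (x i • EuclideanSpace.single i (1:ℝ)) j :=
    by rw [WithLp.ofLp_sum]; exact Finset.sum_apply j Finset.univ _
  rw [this]
  simp [EuclideanSpace.single_apply]


/-- For a `C²` function `f` and a bounded random vector `z` with normalized
isotropic second moment, `(E[f(θ + σ z)] − f(θ)) / σ² → (1/(2d)) · Tr(∇²f(θ))` as `σ → 0`
through nonzero values, where the trace of the Hessian is the sum of the second partial
derivatives, expressed via the second iterated Fréchet derivative. -/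
theorem isotropic_second_order_limit {d : ℕ} (hd : 1 ≤ d)
    {Ω : Type*} [MeasureSpace Ω] [IsProbabilityMeasure (volume : Measure Ω)]
    (f : EuclideanSpace ℝ (Fin d) → ℝ) (hf : ContDiff ℝ 2 f)
    (z : Ω → EuclideanSpace ℝ (Fin d))
    (hz_int : Integrable z)
    (hz_prod_int : ∀ i j : Fin d, Integrable (fun ω => z ω i * z ω j))
    (hz_mean : (∫ ω, z ω) = 0)
    (hz_iso : ∀ i j : Fin d,
      (∫ ω, z ω i * z ω j) = if i = j then 1 / (d : ℝ) else 0)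
    (C : ℝ) (hzC : ∀ᵐ ω ∂(volume : Measure Ω), ‖z ω‖ ≤ C)
    (θ : EuclideanSpace ℝ (Fin d)) :
    Tendsto (fun σ : ℝ => ((∫ ω, f (θ + σ • z ω)) - f θ) / σ ^ 2)
      (𝓝[≠] (0 : ℝ))
      (𝓝 ((1 / (2 * (d : ℝ))) * ∑ i : Fin d, iteratedFDeriv ℝ 2 f θ
        ![EuclideanSpace.single i 1, EuclideanSpace.single i 1])) := by
  set B := fderiv ℝ (fderiv ℝ f) θ with hB
  set L := fderiv ℝ f θ with hL
  set C' : ℝ := max C 0 with hC'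
  have hC'0 : 0 ≤ C' := le_max_right _ _
  have hzC' : ∀ᵐ ω ∂(volume : Measure Ω), ‖z ω‖ ≤ C' := by
    filter_upwards [hzC] with ω h
    exact le_trans h (le_max_left C 0)
  have hzm : AEStronglyMeasurable z (volume : Measure Ω) := hz_int.aestronglyMeasurable
  -- bound on the second derivative on the closed ball
  have hcont2 : Continuous (fderiv ℝ (fderiv ℝ f)) := by
    have h1 : ContDiff ℝ 1 (fderiv ℝ f) := hf.fderiv_right (le_refl 2)
    exact (h1.fderiv_right (m := 0) (by norm_num)).continuous
  obtain ⟨M, hM⟩ : ∃ M, ∀ x ∈ closedBall θ C', ‖fderiv ℝ (fderiv ℝ f) x‖ ≤ M :=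
    by obtain ⟨M, hM⟩ := (isCompact_closedBall θ C').exists_bound_of_continuousOn (f := fderiv ℝ (fderiv ℝ f)) (by exact hcont2.continuousOn)
       exact ⟨M, hM⟩
  set M' : ℝ := max M 0 with hM'
  have hM'0 : 0 ≤ M' := le_max_right _ _
  have hM'b : ∀ x ∈ closedBall θ C', ‖fderiv ℝ (fderiv ℝ f) x‖ ≤ M' :=
    fun x hx => (hM x hx).trans (le_max_left _ _)
  -- candidate family
  set F : ℝ → Ω → ℝ := fun σ ω => (f (θ + σ • z ω) - f θ - σ * L (z ω)) / σ ^ 2 with hF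
  -- dominated convergence
  have hDCT : Tendsto (fun σ => ∫ ω, F σ ω) (𝓝[≠] (0:ℝ))
      (𝓝 (∫ ω, (1/2) * B (z ω) (z ω))) := by
    apply tendsto_integral_filter_of_dominated_convergence (fun _ => M' * C' ^ 2)
    · filter_upwards with σ
      have hfc : Continuous f := hf.continuous
      have hLc : Continuous L := L.continuous
      have hc : Continuous fun x : EuclideanSpace ℝ (Fin d) => (f (θ + σ • x) - f θ - σ * L x) / σ ^ 2 := by
        fun_prop
      exact hc.comp_aestronglyMeasurable hzm
    · have h1 : ∀ᶠ σ : ℝ in 𝓝[≠] 0, |σ| ≤ 1 := by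
        apply eventually_nhdsWithin_of_eventually_nhds
        have : Metric.closedBall (0:ℝ) 1 ∈ 𝓝 (0:ℝ) := Metric.closedBall_mem_nhds 0 one_pos
        filter_upwards [this] with σ hσ
        simpa [Real.dist_eq] using hσ
      filter_upwards [h1, self_mem_nhdsWithin] with σ hσ1 (hσ : σ ≠ 0)
      filter_upwards [hzC'] with ω hω
      have hσ2 : (0:ℝ) < σ ^ 2 := by positivity
      have hnorm : ‖σ • z ω‖ ≤ C' := by
        rw [norm_smul]
        calc ‖σ‖ * ‖z ω‖ ≤ 1 * C' :=
          mul_le_mul hσ1 hω (norm_nonneg _) zero_le_one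
        _ = C' := one_mul _
      have hq := quad_bound f hf θ C' M' hM'0 hM'b (σ • z ω) hnorm
      have hLs : L (σ • z ω) = σ * L (z ω) := by
        simpa [smul_eq_mul] using L.map_smul σ (z ω)
      rw [hLs] at hq
      have : ‖F σ ω‖ = ‖f (θ + σ • z ω) - f θ - σ * L (z ω)‖ / σ ^ 2 := by
        rw [hF]
        rw [norm_div]
        congr 1
        simp [abs_of_pos hσ2]
      rw [this]
      rw [div_le_iff₀ hσ2]
      calc ‖f (θ + σ • z ω) - f θ - σ * L (z ω)‖ ≤ M' * ‖σ • z ω‖ ^ 2 := hq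
      _ ≤ M' * C' ^ 2 * σ ^ 2 := by
          rw [norm_smul]
          have : (‖σ‖ * ‖z ω‖) ^ 2 = ‖z ω‖^2 * σ^2 := by
            rw [Real.norm_eq_abs, mul_pow, sq_abs]; ring
          rw [this]
          rw [← mul_assoc]
          apply mul_le_mul_of_nonneg_right _ (sq_nonneg σ)
          apply mul_le_mul_of_nonneg_left _ hM'0
          exact pow_le_pow_left₀ (norm_nonneg _) hω 2
    · exact integrable_const _
    · filter_upwards with ω
      exact ptwise_limit f hf θ (z ω)
  -- rewrite the integrand for σ ≠ 0
  have hcongr : (fun σ => ∫ ω, F σ ω) =ᶠ[𝓝[≠] (0:ℝ)]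
      (fun σ : ℝ => ((∫ ω, f (θ + σ • z ω)) - f θ) / σ ^ 2) := by
    filter_upwards [self_mem_nhdsWithin] with σ (hσ : σ ≠ 0)
    have hI1 : Integrable (fun ω => f (θ + σ • z ω)) (volume : Measure Ω) := by
      obtain ⟨K, hK⟩ : ∃ K, ∀ x ∈ closedBall θ (|σ| * C'), ‖f x‖ ≤ K :=
        (isCompact_closedBall θ (|σ| * C')).exists_bound_of_continuousOn
          hf.continuous.continuousOn
      apply Integrable.mono' (integrable_const K)
      · have hcc : Continuous fun x : EuclideanSpace ℝ (Fin d) => f (θ + σ • x) :=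
          hf.continuous.comp (by fun_prop)
        exact hcc.comp_aestronglyMeasurable hzm
      · filter_upwards [hzC'] with ω hω
        apply hK
        simp only [mem_closedBall, dist_eq_norm, add_sub_cancel_left]
        rw [norm_smul, Real.norm_eq_abs]
        exact mul_le_mul_of_nonneg_left hω (abs_nonneg σ)
    have hI3 : Integrable (fun ω => σ * L (z ω)) (volume : Measure Ω) :=
      (L.integrable_comp hz_int).const_mul σ
    have hzint : (∫ ω, L (z ω)) = 0 := by
      rw [L.integral_comp_comm hz_int, hz_mean, map_zero]
    have : (∫ ω, F σ ω) = (∫ ω, f (θ + σ • z ω) - f θ - σ * L (z ω)) / σ ^ 2 := by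
      rw [hF]
      exact integral_div _ _
    have hI2 : Integrable (fun ω => f (θ + σ • z ω) - f θ) (volume : Measure Ω) :=
      hI1.sub (integrable_const (f θ))
    rw [this, integral_sub hI2 hI3, integral_sub hI1 (integrable_const (f θ)),
      integral_const, integral_const_mul, hzint, mul_zero, sub_zero, probReal_univ]
    simp
  -- identify the limit value
  have hval : (∫ ω, (1/2) * B (z ω) (z ω)) =
      (1 / (2 * (d : ℝ))) * ∑ i : Fin d, iteratedFDeriv ℝ 2 f θ
        ![EuclideanSpace.single i 1, EuclideanSpace.single i 1] := by
    have hexp : ∀ x : EuclideanSpace ℝ (Fin d), B x x =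
        ∑ i : Fin d, ∑ j : Fin d, B (EuclideanSpace.single i 1) (EuclideanSpace.single j 1)
          * (x i * x j) := by
      intro x
      conv_lhs => rw [euclid_decomp x]
      simp only [map_sum, ContinuousLinearMap.sum_apply, _root_.map_smul,
        ContinuousLinearMap.smul_apply, smul_eq_mul]
      rw [Finset.sum_comm]
      apply Finset.sum_congr rfl
      intro i _
      rw [Finset.mul_sum]
      apply Finset.sum_congr rfl
      intro j _
      ring
    have hint : ∀ i j : Fin d, Integrable (fun ω =>
        B (EuclideanSpace.single i 1) (EuclideanSpace.single j 1) * (z ω i * z ω j))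
        (volume : Measure Ω) := fun i j => (hz_prod_int i j).const_mul _
    have hd0 : (d : ℝ) ≠ 0 := Nat.cast_ne_zero.mpr (Nat.one_le_iff_ne_zero.mp hd)
    calc (∫ ω, (1/2) * B (z ω) (z ω))
        = (1/2) * ∫ ω, B (z ω) (z ω) := integral_const_mul _ _
      _ = (1/2) * ∑ i : Fin d, ∑ j : Fin d,
            B (EuclideanSpace.single i 1) (EuclideanSpace.single j 1)
              * ∫ ω, z ω i * z ω j := by
          congr 1
          simp only [hexp]
          rw [integral_finset_sum _ (fun i _ => integrable_finset_sum _ (fun j _ => hint i j))]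
          apply Finset.sum_congr rfl
          intro i _
          rw [integral_finset_sum _ (fun j _ => hint i j)]
          apply Finset.sum_congr rfl
          intro j _
          exact integral_const_mul _ _
      _ = (1/2) * ∑ i : Fin d, B (EuclideanSpace.single i 1) (EuclideanSpace.single i 1)
            * (1 / (d : ℝ)) := by
          congr 1
          apply Finset.sum_congr rfl
          intro i _
          simp only [hz_iso, mul_ite, mul_one, mul_zero]
          simp [Finset.sum_ite_eq]
      _ = (1 / (2 * (d : ℝ))) * ∑ i : Fin d, iteratedFDeriv ℝ 2 f θ
            ![EuclideanSpace.single i 1, EuclideanSpace.single i 1] := by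
          simp only [iteratedFDeriv_two_apply, Matrix.cons_val_zero, Matrix.cons_val_one,
            Matrix.head_cons, ← hB]
          rw [Finset.mul_sum, Finset.mul_sum]
          apply Finset.sum_congr rfl
          intro i _
          field_simp
  rw [← hval]
  exact hDCT.congr' hcongr
end

section
/- Let f : ℝ^d → ℝ be twice continuously differentiable, let γ > 0, and let g : ℝ^d → ℝ^d be differentiable such that ∇f(g(θ)) + (1/γ)·(g(θ) − θ) = 0 for all θ ∈ ℝ^d. Then for every θ ∈ ℝ^d, the linear map ∇²f(g(θ)) + (1/γ)·Id is invertible on ℝ^d, and the Jacobian of g satisfies Dg(θ) = (1/γ)·(∇²f(g(θ)) + (1/γ)·Id)⁻¹. (In particular, a right inverse of a linear endomorphism of ℝ^d is a two-sided inverse.) -/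
lemma clm_mul_eq_one_comm {d : ℕ}
    {A B : EuclideanSpace ℝ (Fin d) →L[ℝ] EuclideanSpace ℝ (Fin d)}
    (h : A * B = 1) : B * A = 1 := by
  have h' : (A : EuclideanSpace ℝ (Fin d) →ₗ[ℝ] EuclideanSpace ℝ (Fin d)) * B = 1 := by
    refine LinearMap.ext fun x => ?_; simpa using congrArg (fun T => T x) h
  have h2 := (mul_eq_one_comm).mp h'
  refine ContinuousLinearMap.ext fun x => ?_
  simpa using congrArg (fun T => T x) h2

/-- Under the stationarity identity `∇f(g(θ)) + (1/γ)·(g(θ) − θ) = 0`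
with `f` of class `C²` and `g` differentiable, the linear map `∇²f(g(θ)) + (1/γ)·Id`
is invertible (as an element of the ring of continuous linear endomorphisms of `ℝ^d`,
where a right inverse is automatically two-sided), and the Jacobian of `g` satisfies
`Dg(θ) = (1/γ)·(∇²f(g(θ)) + (1/γ)·Id)⁻¹`. -/
theorem implicit_jacobian_formula {d : ℕ}
    (f : EuclideanSpace ℝ (Fin d) → ℝ) (hf : ContDiff ℝ 2 f)
    (γ : ℝ) (hγ : 0 < γ)
    (g : EuclideanSpace ℝ (Fin d) → EuclideanSpace ℝ (Fin d))
    (hg : Differentiable ℝ g)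
    (hstat : ∀ θ : EuclideanSpace ℝ (Fin d),
      gradient f (g θ) + (1 / γ) • (g θ - θ) = 0)
    (θ : EuclideanSpace ℝ (Fin d)) :
    IsUnit (fderiv ℝ (gradient f) (g θ) +
        (1 / γ) • (1 : EuclideanSpace ℝ (Fin d) →L[ℝ] EuclideanSpace ℝ (Fin d))) ∧
    fderiv ℝ g θ =
      (1 / γ) • Ring.inverse (fderiv ℝ (gradient f) (g θ) +
        (1 / γ) • (1 : EuclideanSpace ℝ (Fin d) →L[ℝ] EuclideanSpace ℝ (Fin d))) := by
  have hγ' : γ ≠ 0 := ne_of_gt hγ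
  have hgrad : ContDiff ℝ 1 (gradient f) := by
    have h1 : ContDiff ℝ 1 (fderiv ℝ f) := hf.fderiv_right (by norm_num)
    exact (InnerProductSpace.toDual ℝ (EuclideanSpace ℝ (Fin d))).symm.contDiff.comp h1
  set H := fderiv ℝ (gradient f) (g θ) with hH
  set Dg := fderiv ℝ g θ with hDg
  have h1 : HasFDerivAt (fun t => gradient f (g t)) (H.comp Dg) θ :=
    ((hgrad.differentiable one_ne_zero (g θ)).hasFDerivAt).comp θ (hg θ).hasFDerivAt
  have h2 : HasFDerivAt (fun t : EuclideanSpace ℝ (Fin d) => g t - t) (Dg - 1) θ := by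
    exact (hg θ).hasFDerivAt.sub (hasFDerivAt_id θ)
  have h3 : HasFDerivAt (fun t => gradient f (g t) + (1 / γ) • (g t - t))
      (H.comp Dg + (1 / γ) • (Dg - 1)) θ := h1.add (h2.const_smul (1 / γ))
  have hfun : (fun t => gradient f (g t) + (1 / γ) • (g t - t))
      = fun _ : EuclideanSpace ℝ (Fin d) => (0 : EuclideanSpace ℝ (Fin d)) := by
    funext t; exact hstat t
  rw [hfun] at h3
  have hzero : H.comp Dg + (1 / γ) • (Dg - 1) = 0 := h3.unique (hasFDerivAt_const 0 θ)
  have hcomp : H.comp Dg = (1 / γ) • (1 : EuclideanSpace ℝ (Fin d) →L[ℝ] EuclideanSpace ℝ (Fin d)) - (1 / γ) • Dg := by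
    rw [smul_sub] at hzero
    linear_combination (norm := module) hzero
  have key : (H + (1 / γ) • (1 : EuclideanSpace ℝ (Fin d) →L[ℝ] EuclideanSpace ℝ (Fin d))) * (γ • Dg) = 1 := by
    refine ContinuousLinearMap.ext fun x => ?_
    have hx := congrArg (fun T => T x) hcomp
    simp only [ContinuousLinearMap.coe_comp', Function.comp_apply,
      ContinuousLinearMap.sub_apply, ContinuousLinearMap.smul_apply,
      ContinuousLinearMap.one_apply] at hx
    simp only [ContinuousLinearMap.mul_apply, ContinuousLinearMap.add_apply,
      ContinuousLinearMap.smul_apply, ContinuousLinearMap.one_apply, map_smul, hx]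
    rw [sub_add_cancel, smul_smul, mul_one_div, div_self hγ', one_smul]
  have key' := clm_mul_eq_one_comm key
  let u : Units (EuclideanSpace ℝ (Fin d) →L[ℝ] EuclideanSpace ℝ (Fin d)) :=
    ⟨H + (1 / γ) • 1, γ • Dg, key, key'⟩
  refine ⟨⟨u, rfl⟩, ?_⟩
  have hinv : Ring.inverse (H + (1 / γ) • (1 : EuclideanSpace ℝ (Fin d) →L[ℝ] EuclideanSpace ℝ (Fin d))) = γ • Dg := by
    rw [show H + (1 / γ) • (1 : EuclideanSpace ℝ (Fin d) →L[ℝ] EuclideanSpace ℝ (Fin d)) = (u : _) from rfl,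
      Ring.inverse_unit]
    rfl
  rw [hinv, smul_smul, one_div_mul_cancel hγ', one_smul]
end

section
/- Let f : ℝ^d → ℝ be twice continuously differentiable, let γ > 0, let g : ℝ^d → ℝ^d be differentiable with ∇f(g(θ)) + (1/γ)·(g(θ) − θ) = 0 for all θ ∈ ℝ^d, and let h : ℝ^d → ℝ be differentiable. Then for every θ ∈ ℝ^d, the hypergradient x := ∇(h ∘ g)(θ) satisfies the linear system (∇²f(g(θ)) + (1/γ)·Id)(x) = (1/γ)·∇h(g(θ)). (Equation (6) of the paper.) -/
open InnerProductSpace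

/-- The (real) inverse Riesz map as a continuous linear map. -/
noncomputable def dualIso (E : Type*) [NormedAddCommGroup E] [InnerProductSpace ℝ E]
    [FiniteDimensional ℝ E] : (E →L[ℝ] ℝ) →L[ℝ] E :=
  LinearMap.toContinuousLinearMap
    { toFun := fun y => (toDual ℝ E).symm y
      map_add' := fun y z => by simp
      map_smul' := fun c y => by simp }

lemma hypergradient_aux {E : Type*} [NormedAddCommGroup E] [InnerProductSpace ℝ E]
    [FiniteDimensional ℝ E] [CompleteSpace E]
    (f : E → ℝ) (hf : ContDiff ℝ 2 f)
    (γ : ℝ) (hγ : 0 < γ)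
    (g : E → E) (hg : Differentiable ℝ g)
    (hstat : ∀ θ : E, gradient f (g θ) + (1 / γ) • (g θ - θ) = 0)
    (h : E → ℝ) (hh : Differentiable ℝ h) (θ : E) :
    (fderiv ℝ (gradient f) (g θ) + (1 / γ) • ContinuousLinearMap.id ℝ E)
        (gradient (h ∘ g) θ) = (1 / γ) • gradient h (g θ) := by
  set L : (E →L[ℝ] ℝ) →L[ℝ] E := dualIso E with hL
  have hLapp : ∀ y : E →L[ℝ] ℝ, L y = (toDual ℝ E).symm y := fun y => rfl
  have hfd : Differentiable ℝ (fderiv ℝ f) :=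
    (hf.fderiv_right (m := 1) le_rfl).differentiable one_ne_zero
  have hgradeq : gradient f = fun x => L (fderiv ℝ f x) := funext fun x => rfl
  have hgrad : Differentiable ℝ (gradient f) := by
    rw [hgradeq]; exact fun x => (L.differentiable.differentiableAt).comp x (hfd x)
  set H := fderiv ℝ (gradient f) (g θ) with hH
  set Dg := fderiv ℝ g θ with hDg
  have hHcomp : H = L.comp (fderiv ℝ (fderiv ℝ f) (g θ)) := by
    rw [hH, hgradeq]
    exact (L.hasFDerivAt.comp (g θ) (hfd (g θ)).hasFDerivAt).fderiv
  have hsymm : IsSymmSndFDerivAt ℝ f (g θ) :=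
    hf.contDiffAt.isSymmSndFDerivAt (by norm_num)
  have hHsa : ∀ u v : E, ⟪H u, v⟫_ℝ = ⟪H v, u⟫_ℝ := by
    intro u v
    rw [hHcomp]
    simp only [ContinuousLinearMap.comp_apply, hLapp, toDual_symm_apply]
    exact hsymm u v
  set A : E →L[ℝ] E := H + (1 / γ) • ContinuousLinearMap.id ℝ E with hA
  have hF1 : HasFDerivAt (fun t => gradient f (g t)) (H.comp Dg) θ :=
    (hgrad (g θ)).hasFDerivAt.comp θ (hg θ).hasFDerivAt
  have hF2 : HasFDerivAt (fun t : E => (1 / γ) • (g t - t))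
      ((1 / γ) • (Dg - ContinuousLinearMap.id ℝ E)) θ :=
    ((hg θ).hasFDerivAt.sub (hasFDerivAt_id θ)).const_smul (1 / γ)
  have hzero : (fun t => gradient f (g t) + (1 / γ) • (g t - t)) = fun _ => (0 : E) :=
    funext hstat
  have hkey0 : H.comp Dg + (1 / γ) • (Dg - ContinuousLinearMap.id ℝ E) = 0 := by
    have := hF1.add hF2
    rw [show ((fun t => gradient f (g t)) + fun t : E => (1 / γ) • (g t - t)) =
      (fun t => gradient f (g t) + (1 / γ) • (g t - t)) from rfl, hzero] at this
    exact this.unique (hasFDerivAt_const 0 θ)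
  have hγ' : (1 / γ) * γ = 1 := by field_simp
  have hγ'' : γ * (1 / γ) = 1 := by field_simp
  have hAD : ∀ x : E, A (Dg x) = (1 / γ) • x := by
    intro x
    have h0 : H (Dg x) + (1 / γ) • (Dg x - x) = 0 := by
      have := congrFun (congrArg (DFunLike.coe) hkey0) x
      simpa using this
    have hHDg : H (Dg x) = (1 / γ) • x - (1 / γ) • Dg x := by
      rw [smul_sub] at h0; linear_combination (norm := module) h0
    simp only [hA, ContinuousLinearMap.add_apply, ContinuousLinearMap.smul_apply,
      ContinuousLinearMap.id_apply, hHDg]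
    module
  have hDA : ∀ u : E, Dg (A u) = (1 / γ) • u := by
    have hone : (γ • (A : E →ₗ[ℝ] E)) * (Dg : E →ₗ[ℝ] E) = 1 := by
      apply LinearMap.ext
      intro x
      simp only [Module.End.mul_apply, LinearMap.smul_apply, ContinuousLinearMap.coe_coe,
        Module.End.one_apply, hAD x, smul_smul, hγ'', one_smul]
    have hone' := mul_eq_one_comm.mp hone
    intro u
    have h1 := LinearMap.ext_iff.mp hone' u
    simp only [Module.End.mul_apply, Module.End.one_apply, LinearMap.smul_apply,
      ContinuousLinearMap.coe_coe, map_smul] at h1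
    have h2 : γ • Dg (A u) = u := by simpa [map_smul] using h1
    have h3 : Dg (A u) = γ⁻¹ • u := by
      conv_rhs => rw [← h2]
      rw [smul_smul, inv_mul_cancel₀ hγ.ne', one_smul]
    rw [h3, one_div]
  have hchain : ∀ u : E, ⟪gradient (h ∘ g) θ, u⟫_ℝ = ⟪gradient h (g θ), Dg u⟫_ℝ := by
    intro u
    have hcomp : fderiv ℝ (h ∘ g) θ = (fderiv ℝ h (g θ)).comp Dg :=
      fderiv_comp θ (hh (g θ)) (hg θ)
    have e1 : ⟪gradient (h ∘ g) θ, u⟫_ℝ = fderiv ℝ (h ∘ g) θ u := toDual_symm_apply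
    have e2 : ⟪gradient h (g θ), Dg u⟫_ℝ = fderiv ℝ h (g θ) (Dg u) := toDual_symm_apply
    rw [e1, e2, hcomp]; rfl
  apply ext_inner_right ℝ
  intro u
  have hAsa : ⟪A (gradient (h ∘ g) θ), u⟫_ℝ = ⟪gradient (h ∘ g) θ, A u⟫_ℝ := by
    simp only [hA, ContinuousLinearMap.add_apply, ContinuousLinearMap.smul_apply,
      ContinuousLinearMap.id_apply, inner_add_left, inner_add_right,
      inner_smul_left, inner_smul_right]
    rw [hHsa, real_inner_comm (H u)]
    simp only [starRingEnd_apply, star_trivial]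
  rw [hAsa, hchain (A u), hDA u, inner_smul_right, inner_smul_left]
  simp only [starRingEnd_apply, star_trivial]

/-- (Equation (6) of the paper.) Under the stationarity identity
`∇f(g(θ)) + (1/γ)·(g(θ) − θ) = 0` with `f` of class `C²`, `g` differentiable, and `h`
a differentiable scalar function, the hypergradient `x := ∇(h ∘ g)(θ)` solves the linear
system `(∇²f(g(θ)) + (1/γ)·Id)(x) = (1/γ)·∇h(g(θ))`. -/
theorem hypergradient_linear_system {d : ℕ}
    (f : EuclideanSpace ℝ (Fin d) → ℝ) (hf : ContDiff ℝ 2 f)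
    (γ : ℝ) (hγ : 0 < γ)
    (g : EuclideanSpace ℝ (Fin d) → EuclideanSpace ℝ (Fin d))
    (hg : Differentiable ℝ g)
    (hstat : ∀ θ : EuclideanSpace ℝ (Fin d),
      gradient f (g θ) + (1 / γ) • (g θ - θ) = 0)
    (h : EuclideanSpace ℝ (Fin d) → ℝ) (hh : Differentiable ℝ h)
    (θ : EuclideanSpace ℝ (Fin d)) :
    (fderiv ℝ (gradient f) (g θ) +
        (1 / γ) • ContinuousLinearMap.id ℝ (EuclideanSpace ℝ (Fin d)))
        (gradient (h ∘ g) θ) =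
      (1 / γ) • gradient h (g θ) := by
  exact hypergradient_aux f hf γ hγ g hg hstat h hh θ
end
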